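/- arXiv:2203.12792 — 2 statements merged into one kernel-verified Lean document; each statement's English description precedes it below -/
import Mathlib

section
/- Fix Δ ∈ ℝ and let D_+ = {r : q·(p(r) - n(r)) > Δ·n(r)} where p, n are the densities of P, N. If D is any measurable set with Q(D) = Q(D_+) and N(D \ D_+) > N(D_+ \ D), then P(D_+) - N(D_+) > P(D) - N(D). (Bathtub-type optimality: the superlevel set maximizes P(D) - N(D) among sets of equal Q-measure.) -/
open MeasureTheory

/-- Bathtub-type optimality. With D_+ the superlevel set
{r : q·(p(r) - n(r)) > Δ·n(r)}, if D is measurable with Q(D) = Q(D_+) and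
N(D \ D_+) > N(D_+ \ D), then P(D_+) - N(D_+) > P(D) - N(D). -/
theorem stmt_4
    (p n : ℝ → ℝ) (hp : Measurable p) (hn : Measurable n)
    (hp0 : ∀ r, 0 ≤ p r) (hn0 : ∀ r, 0 ≤ n r)
    (P N Q : Measure ℝ)
    (hP : P = volume.withDensity (fun r => ENNReal.ofReal (p r)))
    (hN : N = volume.withDensity (fun r => ENNReal.ofReal (n r)))
    [IsProbabilityMeasure P] [IsProbabilityMeasure N] [IsProbabilityMeasure Q]
    (q : ℝ) (hq0 : 0 < q) (hq1 : q < 1)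
    (hQ : ∀ A : Set ℝ, MeasurableSet A →
      (Q A).toReal = q * (P A).toReal + (1 - q) * (N A).toReal)
    (Δ : ℝ)
    (Dplus : Set ℝ) (hDplus : Dplus = {r | q * (p r - n r) > Δ * n r})
    (D : Set ℝ) (hD : MeasurableSet D)
    (hQeq : Q D = Q Dplus)
    (hNdiff : (N (Dplus \ D)).toReal < (N (D \ Dplus)).toReal) :
    (P D).toReal - (N D).toReal < (P Dplus).toReal - (N Dplus).toReal := by
  have hDp : MeasurableSet Dplus := by
    rw [hDplus]
    exact measurableSet_lt (hn.const_mul Δ) ((hp.sub hn).const_mul q)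
  have key : ∀ (μ : Measure ℝ), IsFiniteMeasure μ →
      (μ D).toReal - (μ Dplus).toReal
        = (μ (D \ Dplus)).toReal - (μ (Dplus \ D)).toReal := by
    intro μ hμ
    have h1 : μ D = μ (D ∩ Dplus) + μ (D \ Dplus) := (measure_inter_add_diff D hDp).symm
    have h2 : μ Dplus = μ (Dplus ∩ D) + μ (Dplus \ D) := (measure_inter_add_diff Dplus hD).symm
    rw [h1, h2, Set.inter_comm D Dplus,
      ENNReal.toReal_add (measure_ne_top _ _) (measure_ne_top _ _),
      ENNReal.toReal_add (measure_ne_top _ _) (measure_ne_top _ _)]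
    ring
  have hQD := hQ D hD
  have hQDp := hQ Dplus hDp
  rw [hQeq, hQDp] at hQD
  have hNkey := key N inferInstance
  have hNpos : 0 < (N D).toReal - (N Dplus).toReal := by
    rw [hNkey]; linarith
  nlinarith [hQD, hNpos, hq0, hq1]
end

section
/- Suppose there exists a set of positive P-measure on which p(r) > n(r). Then for every Q̂ ∈ (0,1), the optimal superlevel set D_+ with Q(D_+) = Q̂ satisfies P(D_+) - N(D_+) > 0. -/
/-!
Rewritten as `q p > (q + Δ₊) n`, the defining inequality of `D₊` gives `q p ≥ (q + Δ₊) n` on `D₊`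
and the reverse inequality on its complement. For `Δ₊ > 0` integrating it over `D₊` gives
`(q + Δ₊) N(D₊) ≤ q P(D₊)`, so `P(D₊) ≤ N(D₊)` would force `N(D₊) = 0` and then `P(D₊) = 0`,
contradicting `Q(D₊) = Q̂ > 0`. For `Δ₊ < 0` the same argument on the complement uses
`Q(D₊ᶜ) = 1 - Q̂ > 0`. For `Δ₊ = 0` the set `D₊` contains `{p > n}`, where the integrand `p - n`
is positive on a set of positive Lebesgue measure, and `p ≥ n` on the rest of `D₊`.
-/

open MeasureTheory

section Densities

variable {α : Type*} [MeasurableSpace α] {μ : Measure α} {f g : α → ℝ}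

lemma measureReal_withDensity_ofReal (hf0 : 0 ≤ᵐ[μ] f) (hf : AEStronglyMeasurable f μ)
    {s : Set α} (hs : MeasurableSet s) :
    (μ.withDensity fun x => ENNReal.ofReal (f x)).real s = ∫ x in s, f x ∂μ := by
  rw [measureReal_def, withDensity_apply _ hs,
    integral_eq_lintegral_of_nonneg_ae (ae_restrict_of_ae hf0) hf.restrict]

lemma integrable_of_isFiniteMeasure_withDensity_ofReal (hf0 : 0 ≤ᵐ[μ] f)
    (hf : AEStronglyMeasurable f μ)
    [IsFiniteMeasure (μ.withDensity fun x => ENNReal.ofReal (f x))] : Integrable f μ := by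
  refine ⟨hf, (hasFiniteIntegral_iff_ofReal hf0).2 ?_⟩
  simpa [withDensity_apply _ MeasurableSet.univ] using
    measure_lt_top (μ.withDensity fun x => ENNReal.ofReal (f x)) Set.univ

lemma setIntegral_pos_of_pos_on_subset {s t : Set α} (hf : IntegrableOn f t μ)
    (ht : MeasurableSet t) (hst : s ⊆ t) (hf0 : ∀ x ∈ t, 0 ≤ f x) (hpos : ∀ x ∈ s, 0 < f x)
    (hs : μ s ≠ 0) : 0 < ∫ x in t, f x ∂μ :=
  (setIntegral_pos_iff_support_of_nonneg_ae (ae_restrict_of_forall_mem ht hf0) hf).2 <|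
    (pos_iff_ne_zero.2 hs).trans_le <| measure_mono fun x hx => ⟨(hpos x hx).ne', hst hx⟩

lemma mul_measureReal_withDensity_le_of_forall_mem (hf : Integrable f μ) (hf0 : 0 ≤ᵐ[μ] f)
    (hg : Integrable g μ) (hg0 : 0 ≤ᵐ[μ] g) {s : Set α} (hs : MeasurableSet s) {a b : ℝ}
    (h : ∀ x ∈ s, a * f x ≤ b * g x) :
    a * (μ.withDensity fun x => ENNReal.ofReal (f x)).real s ≤
      b * (μ.withDensity fun x => ENNReal.ofReal (g x)).real s := by
  rw [measureReal_withDensity_ofReal hf0 hf.1 hs,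
    measureReal_withDensity_ofReal hg0 hg.1 hs,
    ← integral_const_mul, ← integral_const_mul]
  exact setIntegral_mono_on (hf.integrableOn.const_mul a) (hg.integrableOn.const_mul b) hs h

lemma measureReal_withDensity_lt_of_lt_on_subset (hf : Integrable f μ) (hf0 : 0 ≤ᵐ[μ] f)
    (hg : Integrable g μ) (hg0 : 0 ≤ᵐ[μ] g) {s t : Set α} (ht : MeasurableSet t) (hst : s ⊆ t)
    (hle : ∀ x ∈ t, f x ≤ g x) (hlt : ∀ x ∈ s, f x < g x) (hs : μ s ≠ 0) :
    (μ.withDensity fun x => ENNReal.ofReal (f x)).real t <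
      (μ.withDensity fun x => ENNReal.ofReal (g x)).real t := by
  rw [measureReal_withDensity_ofReal hf0 hf.1 ht,
    measureReal_withDensity_ofReal hg0 hg.1 ht, ← sub_pos,
    ← integral_sub hg.integrableOn hf.integrableOn]
  exact setIntegral_pos_of_pos_on_subset (hg.sub hf).integrableOn ht hst
    (fun x hx => sub_nonneg.2 (hle x hx)) (fun x hx => sub_pos.2 (hlt x hx)) hs

end Densities

lemma sub_pos_of_mul_le_of_mixture_pos {q c x y : ℝ} (hq : 0 < q) (hc : q < c) (hy : 0 ≤ y)
    (hmix : 0 < q * x + (1 - q) * y) (h : c * y ≤ q * x) : 0 < x - y := by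
  by_contra! hxy
  obtain rfl : y = 0 := le_antisymm (by nlinarith) hy
  nlinarith

lemma sub_pos_of_le_mul_of_mixture_pos {q c x y : ℝ} (hq : 0 < q) (hc : c < q) (hy : 0 ≤ y)
    (hmix : 0 < q * x + (1 - q) * y) (h : q * x ≤ c * y) : 0 < y - x := by
  by_contra! hxy
  obtain rfl : y = 0 := le_antisymm (by nlinarith) hy
  nlinarith

section Superlevel

variable {α : Type*} {p n : α → ℝ} {q Δ : ℝ} {S : Set α} {r : α}

lemma add_mul_le_mul_of_mem_superlevel (hS : S ⊆ {r | q * (p r - n r) = Δ * n r})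
    (hr : r ∈ {r | q * (p r - n r) > Δ * n r} ∪ S) : (q + Δ) * n r ≤ q * p r := by
  rcases hr with hr | hr
  · have : Δ * n r < q * (p r - n r) := hr
    linarith
  · have : q * (p r - n r) = Δ * n r := hS hr
    linarith

lemma mul_le_add_mul_of_notMem_superlevel (hr : r ∉ {r | q * (p r - n r) > Δ * n r} ∪ S) :
    q * p r ≤ (q + Δ) * n r := by
  have : ¬ Δ * n r < q * (p r - n r) := fun h => hr (Or.inl h)
  linarith

end Superlevel

theorem stmt_9_general
    (p n : ℝ → ℝ) (hp : Measurable p) (hn : Measurable n)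
    (hp0 : ∀ r, 0 ≤ p r) (hn0 : ∀ r, 0 ≤ n r)
    (P N Q : Measure ℝ)
    (hP : P = volume.withDensity (fun r => ENNReal.ofReal (p r)))
    (hN : N = volume.withDensity (fun r => ENNReal.ofReal (n r)))
    [IsProbabilityMeasure P] [IsProbabilityMeasure N] [IsProbabilityMeasure Q]
    (q : ℝ) (hq0 : 0 < q)
    (hQ : ∀ A : Set ℝ, MeasurableSet A →
      (Q A).toReal = q * (P A).toReal + (1 - q) * (N A).toReal)
    -- assumption (ii): the test can distinguish the populations
    (hdist : 0 < P {r | n r < p r})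
    (Qhat : ℝ) (hQhat : Qhat ∈ Set.Ioo (0 : ℝ) 1)
    -- the bathtub-optimal set D_+ at level Δ₊ ≥ -q with boundary portion S_+
    (Δp : ℝ)
    (Splus : Set ℝ) (hSmeas : MeasurableSet Splus)
    (hS : Splus ⊆ {r | q * (p r - n r) = Δp * n r})
    (Dplus : Set ℝ)
    (hDplus : Dplus = {r | q * (p r - n r) > Δp * n r} ∪ Splus)
    (hQDp : (Q Dplus).toReal = Qhat) :
    0 < (P Dplus).toReal - (N Dplus).toReal := by
  subst hP hN
  simp only [← measureReal_def] at hQ hQDp ⊢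
  have hD : MeasurableSet Dplus :=
    hDplus ▸ (measurableSet_lt (measurable_const.mul hn) (measurable_const.mul (hp.sub hn))).union
      hSmeas
  have hp0' : 0 ≤ᵐ[volume] p := ae_of_all _ hp0
  have hn0' : 0 ≤ᵐ[volume] n := ae_of_all _ hn0
  have hpi : Integrable p :=
    integrable_of_isFiniteMeasure_withDensity_ofReal hp0' hp.aestronglyMeasurable
  have hni : Integrable n :=
    integrable_of_isFiniteMeasure_withDensity_ofReal hn0' hn.aestronglyMeasurable
  have hin : ∀ r ∈ Dplus, (q + Δp) * n r ≤ q * p r := fun r hr =>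
    add_mul_le_mul_of_mem_superlevel hS (hDplus ▸ hr)
  have hout : ∀ r ∈ Dplusᶜ, q * p r ≤ (q + Δp) * n r := fun r hr =>
    mul_le_add_mul_of_notMem_superlevel (hDplus ▸ hr)
  rcases lt_trichotomy Δp 0 with hneg | rfl | hpos
  · have hQc := hQ _ hD.compl
    have key := mul_measureReal_withDensity_le_of_forall_mem hpi hp0' hni hn0' hD.compl hout
    simp only [probReal_compl_eq_one_sub hD, hQDp] at hQc key
    linarith [sub_pos_of_le_mul_of_mixture_pos hq0 (by linarith)
      (sub_nonneg.2 measureReal_le_one) (by linarith [hQhat.2]) key]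
  · have hvol : volume {r | n r < p r} ≠ 0 := fun h =>
      hdist.ne' (withDensity_absolutelyContinuous _ _ h)
    have hsub : {r | n r < p r} ⊆ Dplus := fun r hr =>
      hDplus ▸ Or.inl (by simpa using mul_pos hq0 (sub_pos.2 hr))
    exact sub_pos.2 <| measureReal_withDensity_lt_of_lt_on_subset hni hn0' hpi hp0' hD hsub
      (fun r hr => le_of_mul_le_mul_left (by simpa using hin r hr) hq0)
      (fun r hr => hr) hvol
  · exact sub_pos_of_mul_le_of_mixture_pos hq0 (by linarith) measureReal_nonneg
      (by rw [← hQ Dplus hD, hQDp]; exact hQhat.1)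
      (mul_measureReal_withDensity_le_of_forall_mem hni hn0' hpi hp0' hD hin)

/-- If {r : p(r) > n(r)} has positive P-measure, then for every
Q̂ ∈ (0,1) the bathtub-optimal set D_+ = {r : q(p(r)-n(r)) > Δ₊·n(r)} ∪ S_+
with Q(D_+) = Q̂ satisfies P(D_+) - N(D_+) > 0. -/
theorem stmt_9
    (p n : ℝ → ℝ) (hp : Measurable p) (hn : Measurable n)
    (hp0 : ∀ r, 0 ≤ p r) (hn0 : ∀ r, 0 ≤ n r)
    (P N Q : Measure ℝ)
    (hP : P = volume.withDensity (fun r => ENNReal.ofReal (p r)))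
    (hN : N = volume.withDensity (fun r => ENNReal.ofReal (n r)))
    [IsProbabilityMeasure P] [IsProbabilityMeasure N] [IsProbabilityMeasure Q]
    (q : ℝ) (hq0 : 0 < q) (hq1 : q < 1)
    (hQ : ∀ A : Set ℝ, MeasurableSet A →
      (Q A).toReal = q * (P A).toReal + (1 - q) * (N A).toReal)
    -- assumption (ii): the test can distinguish the populations
    (hdist : 0 < P {r | n r < p r})
    (Qhat : ℝ) (hQhat : Qhat ∈ Set.Ioo (0 : ℝ) 1)
    -- the bathtub-optimal set D_+ at level Δ₊ ≥ -q with boundary portion S_+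
    (Δp : ℝ) (hΔp : -q ≤ Δp)
    (Splus : Set ℝ) (hSmeas : MeasurableSet Splus)
    (hS : Splus ⊆ {r | q * (p r - n r) = Δp * n r})
    (Dplus : Set ℝ)
    (hDplus : Dplus = {r | q * (p r - n r) > Δp * n r} ∪ Splus)
    (hQDp : (Q Dplus).toReal = Qhat) :
    0 < (P Dplus).toReal - (N Dplus).toReal :=
  stmt_9_general p n hp hn hp0 hn0 P N Q hP hN q hq0 hQ hdist Qhat hQhat Δp Splus hSmeas hS Dplus
    hDplus hQDp
end
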